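/- Let V₁, …, V_k be real Hilbert spaces, and for each ℓ let v_ℓ and u¹_ℓ, …, u^m_ℓ be unit vectors in V_ℓ with |⟨u^i_ℓ, u^j_ℓ⟩| ≤ 1/m² whenever i ≠ j. Then there exists i ≤ m such that |⟨v_ℓ, u^i_ℓ⟩| ≤ √(2k/m) for all ℓ ≤ k. -/

import Mathlib

/-!
Expanding `0 ≤ ‖v - ∑ ⟪v, uᵢ⟫ uᵢ‖²` gives a Bessel inequality for almost orthonormal families:
with off-diagonal inner products at most `1/m²`, the error term is at most `1`, so
`∑ᵢ ⟪v_ℓ, uⁱ_ℓ⟫² ≤ 2` for every `ℓ`. Hence the `k × m` array of squared inner products has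
total mass at most `2k`, some column `i` carries at most `2k/m`, and so does each of its entries.
-/

open Finset RealInnerProductSpace

section NearlyOrthonormal

variable {V ι : Type*} [NormedAddCommGroup V] [InnerProductSpace ℝ V] [Fintype ι]
  {u : ι → V} {ε : ℝ}

theorem norm_sum_smul_sq_le_of_abs_inner_le (hε : 0 ≤ ε) (hu : ∀ i, ‖u i‖ = 1)
    (hε_off : ∀ i j, i ≠ j → |⟪u i, u j⟫| ≤ ε) (c : ι → ℝ) :
    ‖∑ i, c i • u i‖ ^ 2 ≤ ∑ i, c i ^ 2 + ε * (∑ i, |c i|) ^ 2 := by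
  classical
  have hterm : ∀ i j, c i * c j * ⟪u i, u j⟫
      ≤ (if i = j then c i ^ 2 else 0) + ε * (|c i| * |c j|) := by
    intro i j
    by_cases hij : i = j
    · subst hij
      rw [real_inner_self_eq_norm_sq, hu i, if_pos rfl]
      nlinarith [mul_nonneg hε (mul_nonneg (abs_nonneg (c i)) (abs_nonneg (c i)))]
    · rw [if_neg hij, zero_add]
      calc c i * c j * ⟪u i, u j⟫ ≤ |c i * c j * ⟪u i, u j⟫| := le_abs_self _
        _ = |c i| * |c j| * |⟪u i, u j⟫| := by rw [abs_mul, abs_mul]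
        _ ≤ |c i| * |c j| * ε := by gcongr; exact hε_off i j hij
        _ = ε * (|c i| * |c j|) := mul_comm _ _
  calc ‖∑ i, c i • u i‖ ^ 2 = ∑ i, ∑ j, c i * c j * ⟪u i, u j⟫ := by
        rw [← real_inner_self_eq_norm_sq]
        simp only [inner_sum, sum_inner, real_inner_smul_left, real_inner_smul_right]
        exact sum_congr rfl fun i _ => sum_congr rfl fun j _ => by rw [real_inner_comm]; ring
    _ ≤ ∑ i, ∑ j, ((if i = j then c i ^ 2 else 0) + ε * (|c i| * |c j|)) := by
        gcongr with i _ j _; exact hterm i j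
    _ = ∑ i, c i ^ 2 + ε * (∑ i, |c i|) ^ 2 := by
        simp only [sum_add_distrib, sum_ite_eq, mem_univ, if_true, ← mul_sum, sq,
          sum_mul_sum]

theorem sum_inner_sq_le_of_abs_inner_le (hε : 0 ≤ ε) (hu : ∀ i, ‖u i‖ = 1)
    (hε_off : ∀ i j, i ≠ j → |⟪u i, u j⟫| ≤ ε) (v : V) :
    ∑ i, ⟪v, u i⟫ ^ 2 ≤ (1 + ε * Fintype.card ι ^ 2) * ‖v‖ ^ 2 := by
  set c : ι → ℝ := fun i => ⟪v, u i⟫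
  have hc : ∀ i, |c i| ≤ ‖v‖ := fun i => by
    simpa [c, hu i] using abs_real_inner_le_norm v (u i)
  have hc_sum : (∑ i, |c i|) ^ 2 ≤ (Fintype.card ι * ‖v‖) ^ 2 := by
    gcongr
    simpa using sum_le_sum fun i (_ : i ∈ univ) => hc i
  have hvw : ⟪v, ∑ i, c i • u i⟫ = ∑ i, c i ^ 2 := by
    simp only [inner_sum, real_inner_smul_right, c, sq]
  have hw := norm_sum_smul_sq_le_of_abs_inner_le hε hu hε_off c
  have hexp := norm_sub_sq_real v (∑ i, c i • u i)
  nlinarith [sq_nonneg ‖v - ∑ i, c i • u i‖, mul_le_mul_of_nonneg_left hc_sum hε]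

end NearlyOrthonormal

theorem exists_forall_le_of_forall_sum_le {ι κ : Type*} [Fintype ι] [Nonempty ι]
    [Fintype κ] (a : κ → ι → ℝ) (ha : ∀ ℓ i, 0 ≤ a ℓ i) {B : ℝ}
    (hB : ∀ ℓ, ∑ i, a ℓ i ≤ B) :
    ∃ i, ∀ ℓ, a ℓ i ≤ Fintype.card κ * B / Fintype.card ι := by
  have hcard : (0 : ℝ) < Fintype.card ι := by exact_mod_cast Fintype.card_pos
  have htotal : ∑ i, ∑ ℓ, a ℓ i ≤ ∑ _i : ι, Fintype.card κ * B / Fintype.card ι := by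
    rw [sum_comm, sum_const, card_univ, nsmul_eq_mul, mul_div_cancel₀ _ hcard.ne']
    simpa using sum_le_sum fun ℓ (_ : ℓ ∈ univ) => hB ℓ
  obtain ⟨i, -, hi⟩ := exists_le_of_sum_le univ_nonempty htotal
  exact ⟨i, fun ℓ => (single_le_sum (fun ℓ _ => ha ℓ i) (mem_univ ℓ)).trans hi⟩

/-- Let `V₁, …, V_k` be real Hilbert spaces and, for each `ℓ`, let
`v_ℓ` and `u¹_ℓ, …, u^m_ℓ` be unit vectors in `V_ℓ` with `|⟨uⁱ_ℓ, uʲ_ℓ⟩| ≤ 1/m²`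
whenever `i ≠ j`.  Then there is some `i ≤ m` with `|⟨v_ℓ, uⁱ_ℓ⟩| ≤ √(2k/m)` for
all `ℓ ≤ k`. -/
theorem stmt15 (k m : ℕ) (hm : 0 < m) (V : Fin k → Type*)
    [∀ ℓ, NormedAddCommGroup (V ℓ)] [∀ ℓ, InnerProductSpace ℝ (V ℓ)]
    (v : ∀ ℓ, V ℓ) (u : ∀ ℓ, Fin m → V ℓ)
    (hv : ∀ ℓ, ‖v ℓ‖ = 1) (hu : ∀ ℓ i, ‖u ℓ i‖ = 1)
    (horth : ∀ ℓ, ∀ i j, i ≠ j → |(inner ℝ (u ℓ i) (u ℓ j) : ℝ)| ≤ 1 / (m : ℝ) ^ 2) :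
    ∃ i : Fin m, ∀ ℓ, |(inner ℝ (v ℓ) (u ℓ i) : ℝ)| ≤ Real.sqrt (2 * k / m) := by
  have : Nonempty (Fin m) := ⟨⟨0, hm⟩⟩
  have hbessel : ∀ ℓ, ∑ i, ⟪v ℓ, u ℓ i⟫ ^ 2 ≤ 2 := fun ℓ => by
    have hm' : (m : ℝ) ≠ 0 := by positivity
    simpa [hv ℓ, hm', one_add_one_eq_two] using
      sum_inner_sq_le_of_abs_inner_le (by positivity) (hu ℓ) (horth ℓ) (v ℓ)
  obtain ⟨i, hi⟩ := exists_forall_le_of_forall_sum_le (fun ℓ i => ⟪v ℓ, u ℓ i⟫ ^ 2)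
    (fun _ _ => sq_nonneg _) hbessel
  refine ⟨i, fun ℓ => Real.abs_le_sqrt ?_⟩
  simpa [mul_comm] using hi ℓ
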